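/- Consider the L2-TV functional E(x_1, x_2) = α|x_1 − x_2| + x_1² + (x_2 − 1)² for data y = (0,1) and α > 0. If 0 < α < 1 then the unique global minimizer is (α/2, 1 − α/2), and if α ≥ 1 the unique global minimizer is (1/2, 1/2). In particular, for every α > 0, no global minimizer takes any of its values in the data set {0, 1}. -/

import Mathlib

/-!
Since `α * |x₁ - x₂| ≥ t * (x₂ - x₁)` for `t = min α 1`, completing squares gives
`E q ≥ E m + (q₁ - m₁)² + (q₂ - m₂)²` with `m = (t/2, 1 - t/2)`, the equality `E m = t - t²/2` holding because
`α (1 - t) = t (1 - t)`. So `m` is the unique minimizer, and `0 < t/2 ≤ 1/2` keeps its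
coordinates away from the data values `0` and `1`.
-/

theorem forall_le_and_eq_of_forall_ne_lt {X β : Type*} [LinearOrder β] {f : X → β} {x₀ : X}
    (h : ∀ x, x ≠ x₀ → f x₀ < f x) :
    (∀ x, f x₀ ≤ f x) ∧ ∀ x, (∀ y, f x ≤ f y) → x = x₀ := by
  refine ⟨fun x => ?_, fun x hx => ?_⟩
  · rcases eq_or_ne x x₀ with rfl | hne
    · exact le_rfl
    · exact (h x hne).le
  · by_contra hne
    exact (h x hne).not_ge (hx x₀)

theorem Prod.sq_add_sq_sub_pos_of_ne {p q : ℝ × ℝ} (h : q ≠ p) :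
    0 < (q.1 - p.1) ^ 2 + (q.2 - p.2) ^ 2 := by
  by_contra! hle
  have h₁ : q.1 = p.1 := by nlinarith [sq_nonneg (q.1 - p.1), sq_nonneg (q.2 - p.2)]
  have h₂ : q.2 = p.2 := by nlinarith [sq_nonneg (q.1 - p.1), sq_nonneg (q.2 - p.2)]
  exact h (Prod.ext h₁ h₂)

namespace L2TV

def energy (α : ℝ) (p : ℝ × ℝ) : ℝ :=
  α * |p.1 - p.2| + p.1 ^ 2 + (p.2 - 1) ^ 2

noncomputable def minimizer (α : ℝ) : ℝ × ℝ :=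
  (min α 1 / 2, 1 - min α 1 / 2)

theorem energy_minimizer_add_sq_le_energy {α : ℝ} (hα : 0 ≤ α) (q : ℝ × ℝ) :
    energy α (minimizer α) + (q.1 - (minimizer α).1) ^ 2 + (q.2 - (minimizer α).2) ^ 2
      ≤ energy α q := by
  set t := min α 1 with ht
  have ht_le : t ≤ α := min_le_left α 1
  have ht_le_one : t ≤ 1 := min_le_right α 1
  have ht_nonneg : 0 ≤ t := le_min hα zero_le_one
  have hslack : α * (1 - t) = t * (1 - t) := by
    rcases min_choice α 1 with h | h <;> rw [← ht] at h
    · rw [h]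
    · rw [h, sub_self, mul_zero, mul_zero]
  have hjump : |t / 2 - (1 - t / 2)| = 1 - t := by
    rw [abs_of_nonpos (by linarith)]; ring
  have htv : t * (q.2 - q.1) ≤ α * |q.1 - q.2| :=
    calc t * (q.2 - q.1) ≤ t * |q.1 - q.2| :=
          mul_le_mul_of_nonneg_left (abs_sub_comm q.1 q.2 ▸ le_abs_self _) ht_nonneg
      _ ≤ α * |q.1 - q.2| := mul_le_mul_of_nonneg_right ht_le (abs_nonneg _)
  simp only [energy, minimizer, ← ht, hjump]
  nlinarith [hslack, htv]

theorem minimizer_isUniqueMin {α : ℝ} (hα : 0 ≤ α) :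
    (∀ q, energy α (minimizer α) ≤ energy α q) ∧
      ∀ p, (∀ q, energy α p ≤ energy α q) → p = minimizer α :=
  forall_le_and_eq_of_forall_ne_lt fun q hq =>
    by nlinarith [energy_minimizer_add_sq_le_energy hα q, Prod.sq_add_sq_sub_pos_of_ne hq]

theorem minimizer_of_lt_one {α : ℝ} (hα : α < 1) : minimizer α = (α / 2, 1 - α / 2) := by
  simp [minimizer, min_eq_left hα.le]

theorem minimizer_of_one_le {α : ℝ} (hα : 1 ≤ α) : minimizer α = (1 / 2, 1 / 2) := by
  simp only [minimizer, min_eq_right hα]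
  norm_num

theorem minimizer_mem_Ioo {α : ℝ} (hα : 0 < α) :
    (minimizer α).1 ∈ Set.Ioo 0 1 ∧ (minimizer α).2 ∈ Set.Ioo 0 1 := by
  have h₀ : 0 < min α 1 := lt_min hα one_pos
  have h₁ : min α 1 ≤ 1 := min_le_right α 1
  simp only [minimizer, Set.mem_Ioo]
  refine ⟨⟨?_, ?_⟩, ?_, ?_⟩ <;> linarith

end L2TV

theorem not_mem_zero_one_of_mem_Ioo {x : ℝ} (hx : x ∈ Set.Ioo 0 1) : x ∉ ({0, 1} : Set ℝ) := by
  rintro (rfl | rfl)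
  exacts [lt_irrefl _ hx.1, lt_irrefl _ hx.2]

theorem l2tv_two_point_example (α : ℝ) (hα : 0 < α)
    (E : ℝ × ℝ → ℝ) (hE : ∀ p : ℝ × ℝ, E p = α * |p.1 - p.2| + p.1 ^ 2 + (p.2 - 1) ^ 2) :
    (α < 1 →
      ((∀ q, E (α / 2, 1 - α / 2) ≤ E q) ∧
        ∀ p, (∀ q, E p ≤ E q) → p = (α / 2, 1 - α / 2))) ∧
    (1 ≤ α →
      ((∀ q, E (1 / 2, 1 / 2) ≤ E q) ∧
        ∀ p, (∀ q, E p ≤ E q) → p = (1 / 2, 1 / 2))) ∧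
    (∀ p, (∀ q, E p ≤ E q) →
      p.1 ∉ ({0, 1} : Set ℝ) ∧ p.2 ∉ ({0, 1} : Set ℝ)) := by
  obtain rfl : E = L2TV.energy α := funext hE
  have hmin := L2TV.minimizer_isUniqueMin hα.le
  refine ⟨fun h => L2TV.minimizer_of_lt_one h ▸ hmin,
    fun h => L2TV.minimizer_of_one_le h ▸ hmin, fun p hp => ?_⟩
  obtain rfl := hmin.2 p hp
  obtain ⟨h₁, h₂⟩ := L2TV.minimizer_mem_Ioo hα
  exact ⟨not_mem_zero_one_of_mem_Ioo h₁, not_mem_zero_one_of_mem_Ioo h₂⟩
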